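/- arXiv:2211.14368 — 7 statements merged into one kernel-verified Lean document; each statement's English description precedes it below -/
import Mathlib

section
/- Let a(s) = (s-α)^d and b(s) = (s-β)^e be polynomials over ℂ with d, e ≥ 1. Then the ideal ⟨(s-α)^d, (t-β)^e⟩ in ℂ[s,t], intersected with the subring ℂ[s+t], is the principal ideal generated by (s+t-α-β)^{d+e-1}. -/
open MvPolynomial

noncomputable section

private lemma coeff_add_pow' (n i j : ℕ) :
    coeff (Finsupp.single 0 i + Finsupp.single 1 j)
      ((X 0 + X 1 : MvPolynomial (Fin 2) ℂ) ^ n) =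
      if i + j = n then ((n.choose i : ℂ)) else 0 := by
  rw [add_pow]
  have hterm : ∀ l : ℕ, (X 0 : MvPolynomial (Fin 2) ℂ) ^ l * X 1 ^ (n - l) * (n.choose l : MvPolynomial (Fin 2) ℂ)
      = monomial (Finsupp.single (0 : Fin 2) l + Finsupp.single 1 (n - l)) ((n.choose l : ℂ)) := by
    intro l
    rw [X_pow_eq_monomial, X_pow_eq_monomial, monomial_mul, mul_one]
    rw [show ((n.choose l : MvPolynomial (Fin 2) ℂ)) = C ((n.choose l : ℂ)) by simp]
    rw [mul_comm, C_mul_monomial, mul_one]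
  simp only [hterm]
  rw [MvPolynomial.coeff_sum]
  simp only [coeff_monomial]
  have hkey : ∀ l ∈ Finset.range (n+1),
      (if Finsupp.single (0 : Fin 2) l + Finsupp.single 1 (n - l) = Finsupp.single 0 i + Finsupp.single 1 j
        then ((n.choose l : ℂ)) else 0)
      = if l = i ∧ i + j = n then ((n.choose l : ℂ)) else 0 := by
    intro l hl
    simp only [Finset.mem_range, Nat.lt_succ_iff] at hl
    congr 1
    simp only [eq_iff_iff]
    constructor
    · intro h
      have h0 := DFunLike.congr_fun h 0
      have h1 := DFunLike.congr_fun h 1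
      simp [Finsupp.single_apply] at h0 h1
      omega
    · intro ⟨h1, h2⟩
      subst h1
      congr 1
      congr 1
      omega
  refine (Finset.sum_congr rfl hkey).trans ?_
  by_cases hij : i + j = n
  · rw [Finset.sum_eq_single i]
    · simp [hij]
    · intro b _ hb; simp [hb]
    · intro h; exfalso; apply h; simp; omega
  · simp [hij]

private lemma coeff_aeval_add (q : Polynomial ℂ) (i j : ℕ) :
    coeff (Finsupp.single 0 i + Finsupp.single 1 j)
      (Polynomial.aeval (X 0 + X 1 : MvPolynomial (Fin 2) ℂ) q) =
      q.coeff (i + j) * ((i+j).choose i : ℂ) := by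
  induction q using Polynomial.induction_on' with
  | add p q hp hq => simp [hp, hq, add_mul]
  | monomial n a =>
    rw [Polynomial.aeval_monomial]
    rw [show (algebraMap ℂ (MvPolynomial (Fin 2) ℂ)) a = C a from rfl]
    rw [coeff_C_mul, coeff_add_pow', Polynomial.coeff_monomial]
    by_cases h : i + j = n
    · subst h; simp
    · simp [h, Ne.symm h]

private lemma taylor_pow' (r : ℂ) (p : Polynomial ℂ) (k : ℕ) :
    Polynomial.taylor r (p ^ k) = (Polynomial.taylor r p) ^ k := by
  induction k with
  | zero => simp [Polynomial.taylor_one]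
  | succ k ih => rw [pow_succ, Polynomial.taylor_mul, ih, pow_succ]

private lemma core (d e : ℕ) (hd : 1 ≤ d) (he : 1 ≤ e) (q : Polynomial ℂ) :
    Polynomial.aeval (X 0 + X 1 : MvPolynomial (Fin 2) ℂ) q ∈
      Ideal.span ({X 0 ^ d, X 1 ^ e} : Set (MvPolynomial (Fin 2) ℂ)) ↔
    Polynomial.X ^ (d + e - 1) ∣ q := by
  constructor
  · intro h
    rw [Ideal.mem_span_pair] at h
    obtain ⟨f, g, hfg⟩ := h
    rw [Polynomial.X_pow_dvd_iff]
    intro k hk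
    set i := min k (d - 1) with hi
    set j := k - i with hj
    have hid : i < d := by omega
    have hje : j < e := by omega
    have hij : i + j = k := by omega
    have := congrArg (coeff (Finsupp.single 0 i + Finsupp.single 1 j)) hfg
    rw [coeff_add, coeff_aeval_add, hij] at this
    rw [X_pow_eq_monomial, X_pow_eq_monomial] at this
    rw [mul_comm f, mul_comm g, coeff_monomial_mul', coeff_monomial_mul'] at this
    rw [if_neg, if_neg, add_zero] at this
    · have hc : ((k.choose i : ℂ)) ≠ 0 := by
        exact_mod_cast Nat.cast_ne_zero.mpr (Nat.choose_pos (by omega)).ne'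
      exact (mul_eq_zero.mp this.symm).resolve_right hc
    · intro hle
      have := hle 1
      simp [Finsupp.single_apply] at this
      omega
    · intro hle
      have := hle 0
      simp [Finsupp.single_apply] at this
      omega
  · rintro ⟨r, rfl⟩
    rw [map_mul, map_pow, Polynomial.aeval_X]
    apply Ideal.mul_mem_right
    apply Ideal.add_pow_mem_of_pow_mem_of_le (m := d) (n := e)
    · exact Ideal.subset_span (by simp)
    · exact Ideal.subset_span (by simp)
    · omega

/-- For `a(s) = (s-α)^d`, `b(t) = (t-β)^e` with `d, e ≥ 1`, the ideal
`⟨(s-α)^d, (t-β)^e⟩` of `ℂ[s,t]` intersected with the subring `ℂ[s+t]` is the principal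
ideal generated by `(s+t-α-β)^(d+e-1)`.  We express membership of an element of the
subring `ℂ[s+t]` by pulling back along the (injective) map `p ↦ p(s+t)`. -/
theorem stmt0 (α β : ℂ) (d e : ℕ) (hd : 1 ≤ d) (he : 1 ≤ e) (p : Polynomial ℂ) :
    Polynomial.aeval (X 0 + X 1 : MvPolynomial (Fin 2) ℂ) p ∈
      Ideal.span ({(X 0 - C α) ^ d, (X 1 - C β) ^ e} : Set (MvPolynomial (Fin 2) ℂ)) ↔
    p ∈ Ideal.span ({(Polynomial.X - Polynomial.C (α + β)) ^ (d + e - 1)} :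
      Set (Polynomial ℂ)) := by
  set n := d + e - 1 with hn
  set γ := α + β with hγ
  set T : MvPolynomial (Fin 2) ℂ →ₐ[ℂ] MvPolynomial (Fin 2) ℂ :=
    aeval ![X 0 + C α, X 1 + C β] with hT
  set S : MvPolynomial (Fin 2) ℂ →ₐ[ℂ] MvPolynomial (Fin 2) ℂ :=
    aeval ![X 0 - C α, X 1 - C β] with hS
  have hTa : T (Polynomial.aeval (X 0 + X 1 : MvPolynomial (Fin 2) ℂ) p)
      = Polynomial.aeval (X 0 + X 1 : MvPolynomial (Fin 2) ℂ) (Polynomial.taylor γ p) := by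
    rw [← Polynomial.aeval_algHom_apply, Polynomial.taylor_apply, Polynomial.aeval_comp]
    congr 1
    simp only [hT, hγ, map_add, aeval_X, Polynomial.aeval_X, Polynomial.aeval_C]
    simp [algebraMap_eq]
    ring_nf
  have hST : S (Polynomial.aeval (X 0 + X 1 : MvPolynomial (Fin 2) ℂ)
      (Polynomial.taylor γ p)) = Polynomial.aeval (X 0 + X 1 : MvPolynomial (Fin 2) ℂ) p := by
    rw [← Polynomial.aeval_algHom_apply, Polynomial.taylor_apply, Polynomial.aeval_comp]
    congr 1
    simp only [hS, hγ, map_add, map_sub, aeval_X, Polynomial.aeval_X, Polynomial.aeval_C]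
    simp [algebraMap_eq]
    ring_nf
  have hmem : Polynomial.aeval (X 0 + X 1 : MvPolynomial (Fin 2) ℂ) p ∈
      Ideal.span ({(X 0 - C α) ^ d, (X 1 - C β) ^ e} : Set (MvPolynomial (Fin 2) ℂ)) ↔
      Polynomial.aeval (X 0 + X 1 : MvPolynomial (Fin 2) ℂ) (Polynomial.taylor γ p) ∈
      Ideal.span ({X 0 ^ d, X 1 ^ e} : Set (MvPolynomial (Fin 2) ℂ)) := by
    constructor
    · intro h
      rw [Ideal.mem_span_pair] at h ⊢
      obtain ⟨f, g, hfg⟩ := h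
      refine ⟨T f, T g, ?_⟩
      rw [← hTa, ← hfg]
      simp only [map_add, map_mul, map_pow, map_sub, hT]
      simp
    · intro h
      rw [Ideal.mem_span_pair] at h ⊢
      obtain ⟨f, g, hfg⟩ := h
      refine ⟨S f, S g, ?_⟩
      rw [← hST, ← hfg]
      simp only [map_add, map_mul, map_pow, hS]
      simp
  rw [hmem, core d e hd he, Ideal.mem_span_singleton]
  constructor
  · rintro ⟨r, hr⟩
    refine ⟨Polynomial.taylor (-γ) r, ?_⟩
    have := congrArg (Polynomial.taylor (-γ)) hr
    rw [Polynomial.taylor_taylor, neg_add_cancel, Polynomial.taylor_zero] at this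
    rw [this, Polynomial.taylor_mul, taylor_pow', Polynomial.taylor_X, Polynomial.C_neg]
    ring
  · rintro ⟨r, rfl⟩
    refine ⟨Polynomial.taylor γ r, ?_⟩
    rw [Polynomial.taylor_mul, taylor_pow']
    congr 1
    rw [Polynomial.taylor_apply, Polynomial.sub_comp, Polynomial.X_comp, Polynomial.C_comp]
    ring
end
end

section
/- Let d, e ≥ 1. If p(u) = Σ_{i=0}^{N} p_i u^i is a polynomial with complex coefficients such that p(s+t) belongs to the ideal ⟨s^d, t^e⟩ of ℂ[s,t], then p(u) is divisible by u^{d+e-1}. -/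
open MvPolynomial

lemma finsupp_pair_eq (a b a' b' : ℕ) :
    (Finsupp.single (0:Fin 2) a + Finsupp.single 1 b
      = Finsupp.single 0 a' + Finsupp.single 1 b') ↔ (a = a' ∧ b = b') := by
  constructor
  · intro h
    constructor
    · have := DFunLike.congr_fun h 0
      simpa [Finsupp.single_apply] using this
    · have := DFunLike.congr_fun h 1
      simpa [Finsupp.single_apply] using this
  · rintro ⟨rfl, rfl⟩; rfl

lemma coeff_X_add_X_pow (i j n : ℕ) :
    MvPolynomial.coeff (Finsupp.single 0 i + Finsupp.single 1 j)
      ((X 0 + X 1 : MvPolynomial (Fin 2) ℂ) ^ n)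
    = if i + j = n then (n.choose i : ℂ) else 0 := by
  rw [add_pow, MvPolynomial.coeff_sum]
  have hterm : ∀ m, (X 0 : MvPolynomial (Fin 2) ℂ) ^ m * X 1 ^ (n - m) * (n.choose m : MvPolynomial (Fin 2) ℂ)
      = monomial (Finsupp.single 0 m + Finsupp.single 1 (n - m)) ((n.choose m : ℂ)) := by
    intro m
    rw [X_pow_eq_monomial, X_pow_eq_monomial, monomial_mul, mul_one]
    rw [show ((n.choose m : ℕ) : MvPolynomial (Fin 2) ℂ) = C ((n.choose m : ℕ) : ℂ) by
      simp]
    rw [mul_comm, C_mul_monomial, mul_one]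
  simp_rw [hterm, coeff_monomial]
  by_cases h : i + j = n
  · rw [if_pos h]
    rw [Finset.sum_eq_single i]
    · rw [if_pos]
      rw [finsupp_pair_eq]; omega
    · intro m hm hmne
      rw [if_neg]
      rw [finsupp_pair_eq]
      omega
    · intro hi
      simp only [Finset.mem_range] at hi
      omega
  · rw [if_neg h]
    apply Finset.sum_eq_zero
    intro m hm
    simp only [Finset.mem_range] at hm
    rw [if_neg]
    rw [finsupp_pair_eq]
    omega

/-- Let `d, e ≥ 1`.  If `p ∈ ℂ[u]` is such that `p(s+t)` belongs to the
ideal `⟨s^d, t^e⟩` of `ℂ[s,t]`, then `p` is divisible by `u^(d+e-1)`. -/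
theorem stmt2 (d e : ℕ) (hd : 1 ≤ d) (he : 1 ≤ e) (p : Polynomial ℂ)
    (hp : Polynomial.aeval (X 0 + X 1 : MvPolynomial (Fin 2) ℂ) p ∈
      Ideal.span ({(X 0) ^ d, (X 1) ^ e} : Set (MvPolynomial (Fin 2) ℂ))) :
    Polynomial.X ^ (d + e - 1) ∣ p := by
  rw [Polynomial.X_pow_dvd_iff]
  intro k hk
  set i := min k (d - 1) with hi
  set j := k - i with hjdef
  have hij : i + j = k := by omega
  have hid : i < d := by omega
  have hje : j < e := by omega
  -- rewrite the span as a monomial-image span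
  have hset : ({(X 0) ^ d, (X 1) ^ e} : Set (MvPolynomial (Fin 2) ℂ))
      = (fun s => monomial s (1 : ℂ)) ''
        ({Finsupp.single 0 d, Finsupp.single 1 e} : Set (Fin 2 →₀ ℕ)) := by
    rw [Set.image_insert_eq, Set.image_singleton, X_pow_eq_monomial, X_pow_eq_monomial]
  rw [hset, mem_ideal_span_monomial_image] at hp
  -- coefficient of the mixed monomial vanishes
  have hc0 : MvPolynomial.coeff (Finsupp.single 0 i + Finsupp.single 1 j)
      (Polynomial.aeval (X 0 + X 1 : MvPolynomial (Fin 2) ℂ) p) = 0 := by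
    by_contra hne
    obtain ⟨si, hsi, hle⟩ := hp _ (MvPolynomial.mem_support_iff.mpr hne)
    rcases hsi with rfl | rfl
    · have := hle 0
      simp [Finsupp.single_apply] at this
      omega
    · have := hle 1
      simp [Finsupp.single_apply] at this
      omega
  -- compute that coefficient
  rw [Polynomial.aeval_eq_sum_range' (Nat.lt_succ_of_le (le_max_left p.natDegree k))]
    at hc0
  rw [MvPolynomial.coeff_sum] at hc0
  simp_rw [MvPolynomial.coeff_smul, coeff_X_add_X_pow, hij, smul_ite, smul_zero] at hc0
  rw [Finset.sum_ite_eq (Finset.range (max p.natDegree k).succ) k] at hc0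
  rw [if_pos (Finset.mem_range.mpr (by omega))] at hc0
  have hch : (k.choose i : ℂ) ≠ 0 := by
    exact_mod_cast (Nat.choose_pos (show i ≤ k by omega)).ne'
  simpa [smul_eq_mul, hch] using hc0
end

section
/- For nonzero polynomials a, b, q ∈ ℂ[s], the ideal ⟨lcm(a,b)(s), q(t)⟩ of ℂ[s,t] equals the intersection of the ideals ⟨a(s), q(t)⟩ and ⟨b(s), q(t)⟩. -/
open MvPolynomial

/-!
Write `a = d a'`, `b = d b'` with `u a' + v b' = 1`, so that `lcm a b ~ d a' b'`. An `f` in both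
ideals splits as `f = u a' f + v b' f`, and `a' ⟨d b', q⟩ + b' ⟨d a', q⟩ ⊆ ⟨d a' b', q⟩`.
-/

theorem Ideal.span_pair_mul_mul_eq_inf {S : Type*} [CommRing S] {a b : S} (hab : IsCoprime a b)
    (d q : S) :
    Ideal.span {d * a * b, q} = Ideal.span {d * a, q} ⊓ Ideal.span {d * b, q} := by
  have mono {x y : S} (h : x ∣ y) : Ideal.span {y, q} ≤ Ideal.span {x, q} := by
    simp only [Ideal.span_insert (s := {q})]
    exact sup_le_sup_right (Ideal.span_singleton_le_span_singleton.mpr h) _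
  refine le_antisymm (le_inf (mono (dvd_mul_right _ _)) (mono ?_)) fun f ⟨hfa, hfb⟩ => ?_
  · exact mul_right_comm d a b ▸ dvd_mul_right _ _
  obtain ⟨x, y, hf⟩ := Ideal.mem_span_pair.mp hfa
  obtain ⟨z, w, hf'⟩ := Ideal.mem_span_pair.mp hfb
  obtain ⟨u, v, huv⟩ := hab
  refine Ideal.mem_span_pair.mpr ⟨u * z + v * x, u * a * w + v * b * y, ?_⟩
  linear_combination f * huv + u * a * hf' + v * b * hf

theorem exists_eq_mul_isCoprime_associated_lcm {R : Type*} [CommRing R] [IsDomain R] [IsBezout R]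
    [GCDMonoid R] (a b : R) :
    ∃ d a' b', a = d * a' ∧ b = d * b' ∧ IsCoprime a' b' ∧ Associated (lcm a b) (d * a' * b') := by
  obtain ⟨a', b', ha, hb, hunit⟩ := extract_gcd a b
  refine ⟨gcd a b, a', b', ha, hb, (gcd_isUnit_iff_isRelPrime.mp hunit).isCoprime, ?_⟩
  by_cases hd : gcd a b = 0
  · obtain ⟨rfl, rfl⟩ := (gcd_eq_zero_iff a b).mp hd
    simp [hd]
  refine (gcd_mul_lcm a b).trans ?_ |>.of_mul_left (Associated.refl _) hd
  rw [Associated.comm, congr_arg₂ (· * ·) ha hb]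
  exact .of_eq (by ring)

theorem Ideal.span_pair_map_lcm {R S F : Type*} [CommRing R] [IsDomain R] [IsBezout R]
    [GCDMonoid R] [CommRing S] [FunLike F R S] [RingHomClass F R S] (φ : F) (a b : R) (q : S) :
    Ideal.span {φ (lcm a b), q} = Ideal.span {φ a, q} ⊓ Ideal.span {φ b, q} := by
  obtain ⟨d, a', b', rfl, rfl, hab, ⟨u, hu⟩⟩ := exists_eq_mul_isCoprime_associated_lcm a b
  have hlcm : Ideal.span {φ (lcm (d * a') (d * b')), q} = Ideal.span {φ (d * a' * b'), q} := by
    rw [← hu, map_mul, Ideal.span_insert, Ideal.span_insert,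
      Ideal.span_singleton_mul_right_unit (u.isUnit.map φ)]
  rw [hlcm]
  have hab' : IsCoprime (φ a') (φ b') := by simpa using hab.map (φ : R →+* S)
  simpa only [map_mul] using Ideal.span_pair_mul_mul_eq_inf hab' (φ d) q

theorem stmt3_general (a b q : Polynomial ℂ) :
    Ideal.span ({Polynomial.aeval (X 0 : MvPolynomial (Fin 2) ℂ) (lcm a b),
        Polynomial.aeval (X 1 : MvPolynomial (Fin 2) ℂ) q} : Set (MvPolynomial (Fin 2) ℂ)) =
      Ideal.span ({Polynomial.aeval (X 0 : MvPolynomial (Fin 2) ℂ) a,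
          Polynomial.aeval (X 1 : MvPolynomial (Fin 2) ℂ) q} : Set (MvPolynomial (Fin 2) ℂ)) ⊓
        Ideal.span ({Polynomial.aeval (X 0 : MvPolynomial (Fin 2) ℂ) b,
          Polynomial.aeval (X 1 : MvPolynomial (Fin 2) ℂ) q} : Set (MvPolynomial (Fin 2) ℂ)) :=
  Ideal.span_pair_map_lcm _ a b _

/-- For nonzero `a, b, q ∈ ℂ[s]`, the ideal `⟨lcm(a,b)(s), q(t)⟩` of
`ℂ[s,t]` equals `⟨a(s), q(t)⟩ ∩ ⟨b(s), q(t)⟩`. -/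
theorem stmt3 (a b q : Polynomial ℂ) (ha : a ≠ 0) (hb : b ≠ 0) (hq : q ≠ 0) :
    Ideal.span ({Polynomial.aeval (X 0 : MvPolynomial (Fin 2) ℂ) (lcm a b),
        Polynomial.aeval (X 1 : MvPolynomial (Fin 2) ℂ) q} : Set (MvPolynomial (Fin 2) ℂ)) =
      Ideal.span ({Polynomial.aeval (X 0 : MvPolynomial (Fin 2) ℂ) a,
          Polynomial.aeval (X 1 : MvPolynomial (Fin 2) ℂ) q} : Set (MvPolynomial (Fin 2) ℂ)) ⊓
        Ideal.span ({Polynomial.aeval (X 0 : MvPolynomial (Fin 2) ℂ) b,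
          Polynomial.aeval (X 1 : MvPolynomial (Fin 2) ℂ) q} : Set (MvPolynomial (Fin 2) ℂ)) :=
  stmt3_general a b q
end

section
/- For nonzero polynomials a, b ∈ ℂ[s], define a ∙ b as the monic generator of the ideal ⟨a(s), b(t)⟩ ∩ ℂ[s+t] (written as a polynomial in u = s+t). Then for any nonzero a, b, q ∈ ℂ[s], lcm(a,b) ∙ q = lcm(a ∙ q, b ∙ q). -/
/-! Over a coefficient ring `R`, an element `f` of `R[t]` lies in `⟨c, Q⟩` for a constant `c` and
a monic `Q` iff `c` divides every coefficient of the remainder `f mod Q`. Taking `R = ℂ[s]` and `Q`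
the normalization of `q(t)`, this gives `⟨lcm(a,b)(s), q(t)⟩ = ⟨a(s), q(t)⟩ ∩ ⟨b(s), q(t)⟩`, so
`p(s+t)` lies in the left ideal iff `a ∙ q ∣ p` and `b ∙ q ∣ p`, i.e. iff `lcm(a ∙ q, b ∙ q) ∣ p`. -/

namespace Polynomial

variable {R : Type*} [CommRing R]

theorem mem_span_C_pair_iff_C_dvd_modByMonic {a : R} {Q f : R[X]} (hQ : Q.Monic) :
    f ∈ Ideal.span {C a, Q} ↔ C a ∣ f %ₘ Q := by
  constructor
  · intro hf
    obtain ⟨x, y, rfl⟩ := Ideal.mem_span_pair.mp hf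
    have hyQ : y * Q %ₘ Q = 0 := (modByMonic_eq_zero_iff_dvd hQ).mpr (dvd_mul_left Q y)
    rw [add_modByMonic, hyQ, add_zero, mul_comm, ← smul_eq_C_mul, smul_modByMonic, smul_eq_C_mul]
    exact dvd_mul_right _ _
  · rintro ⟨c, hc⟩
    refine Ideal.mem_span_pair.mpr ⟨c, f /ₘ Q, ?_⟩
    rw [mul_comm, ← hc, mul_comm, modByMonic_add_div f Q]

theorem span_C_lcm_pair_eq_inf [IsDomain R] [GCDMonoid R] (a b : R) {Q : R[X]} (hQ : Q.Monic) :
    Ideal.span {C (lcm a b), Q} = Ideal.span {C a, Q} ⊓ Ideal.span {C b, Q} := by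
  ext f
  simp only [Ideal.mem_inf, mem_span_C_pair_iff_C_dvd_modByMonic hQ, C_dvd_iff_dvd_coeff,
    lcm_dvd_iff, forall_and]

end Polynomial

theorem Ideal.span_pair_mul_right_unit {α : Type*} [CommSemiring α] (x y : α) {u : α}
    (hu : IsUnit u) : Ideal.span {x, y * u} = Ideal.span {x, y} := by
  rw [Ideal.span_insert, Ideal.span_singleton_mul_right_unit hu, ← Ideal.span_insert]

namespace Polynomial.Bivariate

variable {R : Type*} [CommSemiring R]

theorem equivMvPolynomial_C (p : R[X]) :
    equivMvPolynomial R (C p) = aeval (MvPolynomial.X 0 : MvPolynomial (Fin 2) R) p := by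
  rw [← equivMvPolynomial_C_X, aeval_algHom_apply]
  congr 1
  exact ((aeval_algHom_apply CAlgHom X p).trans (congrArg C (aeval_X_left_apply p))).symm

theorem equivMvPolynomial_map_C (p : R[X]) :
    equivMvPolynomial R (p.map C) = aeval (MvPolynomial.X 1 : MvPolynomial (Fin 2) R) p := by
  rw [← equivMvPolynomial_X, aeval_algHom_apply, ← aeval_map_algebraMap R[X], aeval_X_left_apply]
  rfl

end Polynomial.Bivariate

open MvPolynomial

theorem MvPolynomial.span_aeval_lcm_pair_eq_inf {K : Type*} [Field K] [DecidableEq K]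
    (a b : Polynomial K) {q : Polynomial K} (hq : q ≠ 0) :
    Ideal.span {Polynomial.aeval (X 0 : MvPolynomial (Fin 2) K) (lcm a b),
        Polynomial.aeval (X 1 : MvPolynomial (Fin 2) K) q} =
      Ideal.span {Polynomial.aeval (X 0 : MvPolynomial (Fin 2) K) a,
          Polynomial.aeval (X 1 : MvPolynomial (Fin 2) K) q} ⊓
        Ideal.span {Polynomial.aeval (X 0 : MvPolynomial (Fin 2) K) b,
          Polynomial.aeval (X 1 : MvPolynomial (Fin 2) K) q} := by
  set e := Polynomial.Bivariate.equivMvPolynomial K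
  set q' := q * Polynomial.C q.leadingCoeff⁻¹
  have hq' : (q'.map Polynomial.C).Monic := (Polynomial.monic_mul_leadingCoeff_inv hq).map _
  have span_eq_map : ∀ c, Ideal.span {Polynomial.aeval (X 0 : MvPolynomial (Fin 2) K) c,
      Polynomial.aeval (X 1 : MvPolynomial (Fin 2) K) q} =
      (Ideal.span {Polynomial.C c, q'.map Polynomial.C}).map e := by
    intro c
    rw [Ideal.map_span, Set.image_pair, Polynomial.Bivariate.equivMvPolynomial_C,
      Polynomial.Bivariate.equivMvPolynomial_map_C, Polynomial.aeval_mul, Polynomial.aeval_C,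
      Ideal.span_pair_mul_right_unit]
    exact (isUnit_iff_ne_zero.mpr (inv_ne_zero (Polynomial.leadingCoeff_ne_zero.mpr hq))).map _
  have map_e : ∀ I, Ideal.map e I = Ideal.comap e.symm I :=
    fun I => Ideal.map_comap_of_equiv e.toRingEquiv
  simp only [span_eq_map, Polynomial.span_C_lcm_pair_eq_inf _ _ hq', map_e, Ideal.comap_inf]

theorem stmt4_general (a b q : Polynomial ℂ) (hq : q ≠ 0)
    (g₁ g₂ g₃ : Polynomial ℂ) (hm₁ : g₁.Monic)
    (hg₁ : ∀ p : Polynomial ℂ,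
      Polynomial.aeval (X 0 + X 1 : MvPolynomial (Fin 2) ℂ) p ∈
        Ideal.span ({Polynomial.aeval (X 0 : MvPolynomial (Fin 2) ℂ) (lcm a b),
          Polynomial.aeval (X 1 : MvPolynomial (Fin 2) ℂ) q} : Set (MvPolynomial (Fin 2) ℂ))
        ↔ g₁ ∣ p)
    (hg₂ : ∀ p : Polynomial ℂ,
      Polynomial.aeval (X 0 + X 1 : MvPolynomial (Fin 2) ℂ) p ∈
        Ideal.span ({Polynomial.aeval (X 0 : MvPolynomial (Fin 2) ℂ) a,
          Polynomial.aeval (X 1 : MvPolynomial (Fin 2) ℂ) q} : Set (MvPolynomial (Fin 2) ℂ))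
        ↔ g₂ ∣ p)
    (hg₃ : ∀ p : Polynomial ℂ,
      Polynomial.aeval (X 0 + X 1 : MvPolynomial (Fin 2) ℂ) p ∈
        Ideal.span ({Polynomial.aeval (X 0 : MvPolynomial (Fin 2) ℂ) b,
          Polynomial.aeval (X 1 : MvPolynomial (Fin 2) ℂ) q} : Set (MvPolynomial (Fin 2) ℂ))
        ↔ g₃ ∣ p) :
    g₁ = lcm g₂ g₃ := by
  have dvd_iff : ∀ p, g₁ ∣ p ↔ lcm g₂ g₃ ∣ p := fun p => by
    rw [← hg₁, MvPolynomial.span_aeval_lcm_pair_eq_inf a b hq, Ideal.mem_inf, hg₂, hg₃,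
      lcm_dvd_iff]
  exact dvd_antisymm_of_normalize_eq hm₁.normalize_eq_self (normalize_lcm g₂ g₃)
    ((dvd_iff _).mpr dvd_rfl) ((dvd_iff _).mp dvd_rfl)

/-- For nonzero `a, b ∈ ℂ[s]`, the intersection `⟨a(s), b(t)⟩ ∩ ℂ[s+t]`
is a principal ideal with a unique monic generator `a ∙ b`.  We characterize a monic
polynomial `g` as being this generator by: for every `p ∈ ℂ[u]`, `p(s+t)` lies in the
ideal iff `g ∣ p`.  Then `lcm(a,b) ∙ q = lcm(a ∙ q, b ∙ q)` for nonzero `a, b, q`. -/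
theorem stmt4 (a b q : Polynomial ℂ) (ha : a ≠ 0) (hb : b ≠ 0) (hq : q ≠ 0)
    (g₁ g₂ g₃ : Polynomial ℂ) (hm₁ : g₁.Monic) (hm₂ : g₂.Monic) (hm₃ : g₃.Monic)
    (hg₁ : ∀ p : Polynomial ℂ,
      Polynomial.aeval (X 0 + X 1 : MvPolynomial (Fin 2) ℂ) p ∈
        Ideal.span ({Polynomial.aeval (X 0 : MvPolynomial (Fin 2) ℂ) (lcm a b),
          Polynomial.aeval (X 1 : MvPolynomial (Fin 2) ℂ) q} : Set (MvPolynomial (Fin 2) ℂ))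
        ↔ g₁ ∣ p)
    (hg₂ : ∀ p : Polynomial ℂ,
      Polynomial.aeval (X 0 + X 1 : MvPolynomial (Fin 2) ℂ) p ∈
        Ideal.span ({Polynomial.aeval (X 0 : MvPolynomial (Fin 2) ℂ) a,
          Polynomial.aeval (X 1 : MvPolynomial (Fin 2) ℂ) q} : Set (MvPolynomial (Fin 2) ℂ))
        ↔ g₂ ∣ p)
    (hg₃ : ∀ p : Polynomial ℂ,
      Polynomial.aeval (X 0 + X 1 : MvPolynomial (Fin 2) ℂ) p ∈
        Ideal.span ({Polynomial.aeval (X 0 : MvPolynomial (Fin 2) ℂ) b,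
          Polynomial.aeval (X 1 : MvPolynomial (Fin 2) ℂ) q} : Set (MvPolynomial (Fin 2) ℂ))
        ↔ g₃ ∣ p) :
    g₁ = lcm g₂ g₃ :=
  stmt4_general a b q hq g₁ g₂ g₃ hm₁ hg₁ hg₂ hg₃
end

section
/- Define the star operation: for nonzero a, b ∈ ℂ[s], a * b is the monic polynomial whose set of roots is {ρ + σ : ρ root of a, σ root of b}, and where the multiplicity of a root γ in a * b equals max{ m_ρ(a) + m_σ(b) − 1 : ρ + σ = γ, ρ root of a, σ root of b }, with m denoting root multiplicity. Then for nonzero a, b, q ∈ ℂ[s], lcm(a,b) * q = lcm(a * q, b * q). -/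
/-! Both sides are monic, so it suffices to compare root multiplicities. The multiplicity of a
root in `lcm` is the maximum of the multiplicities, and `max x y + z - 1` is the larger of
`x + z - 1` and `y + z - 1`; so `γ` has multiplicity at most `n` on either side exactly when
`m_ρ(a) + m_σ(q) - 1 ≤ n` and `m_ρ(b) + m_σ(q) - 1 ≤ n` for all roots with `ρ + σ = γ`. -/

open Polynomial in
open scoped Classical in
/-- The star operation: the monic polynomial whose roots are the pairwise sums of roots
of `a` and `b`, where the multiplicity of `γ` is
`max { rootMultiplicity ρ a + rootMultiplicity σ b - 1 : ρ + σ = γ }`.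
If `a` or `b` has no roots (e.g. is a nonzero constant), the product is empty and
`pstar a b = 1`. -/
noncomputable def pstar (a b : Polynomial ℂ) : Polynomial ℂ :=
  ∏ γ ∈ (a.roots.toFinset ×ˢ b.roots.toFinset).image (fun p => p.1 + p.2),
    (X - C γ) ^
      (((a.roots.toFinset ×ˢ b.roots.toFinset).filter (fun p => p.1 + p.2 = γ)).sup
        (fun p => a.rootMultiplicity p.1 + b.rootMultiplicity p.2 - 1))

open Polynomial

namespace Polynomial

variable {R : Type*} [Field R] [DecidableEq R]

theorem rootMultiplicity_gcd {a b : R[X]} (ha : a ≠ 0) (hb : b ≠ 0) (x : R) :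
    rootMultiplicity x (gcd a b) = min (rootMultiplicity x a) (rootMultiplicity x b) := by
  refine le_antisymm (le_min ?_ ?_) ?_
  · exact rootMultiplicity_le_rootMultiplicity_of_dvd ha (gcd_dvd_left a b) x
  · exact rootMultiplicity_le_rootMultiplicity_of_dvd hb (gcd_dvd_right a b) x
  · rw [le_rootMultiplicity_iff (gcd_ne_zero_of_left ha)]
    exact dvd_gcd ((pow_dvd_pow _ (min_le_left _ _)).trans (pow_rootMultiplicity_dvd a x))
      ((pow_dvd_pow _ (min_le_right _ _)).trans (pow_rootMultiplicity_dvd b x))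

theorem rootMultiplicity_lcm {a b : R[X]} (ha : a ≠ 0) (hb : b ≠ 0) (x : R) :
    rootMultiplicity x (lcm a b) = max (rootMultiplicity x a) (rootMultiplicity x b) := by
  have hgl : gcd a b * lcm a b ≠ 0 :=
    mul_ne_zero (gcd_ne_zero_of_left ha) (lcm_ne_zero_iff.mpr ⟨ha, hb⟩)
  have hab : a * b ≠ 0 := mul_ne_zero ha hb
  have hsum : rootMultiplicity x (gcd a b * lcm a b) = rootMultiplicity x (a * b) :=
    le_antisymm (rootMultiplicity_le_rootMultiplicity_of_dvd hab (gcd_mul_lcm a b).dvd x)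
      (rootMultiplicity_le_rootMultiplicity_of_dvd hgl (gcd_mul_lcm a b).symm.dvd x)
  rw [rootMultiplicity_mul hgl, rootMultiplicity_mul hab, rootMultiplicity_gcd ha hb] at hsum
  omega

theorem monic_lcm {a b : R[X]} (ha : a ≠ 0) (hb : b ≠ 0) : (lcm a b).Monic := by
  simpa only [normalize_lcm] using monic_normalize (lcm_ne_zero_iff.mpr ⟨ha, hb⟩)

theorem eq_of_monic_of_rootMultiplicity_eq [IsAlgClosed R] {p q : R[X]} (hp : p.Monic)
    (hq : q.Monic) (h : ∀ x, rootMultiplicity x p = rootMultiplicity x q) : p = q := by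
  have hroots : p.roots = q.roots := Multiset.ext.mpr fun x => by
    rw [count_roots, count_roots, h]
  rw [(IsAlgClosed.splits p).eq_prod_roots_of_monic hp,
    (IsAlgClosed.splits q).eq_prod_roots_of_monic hq, hroots]

end Polynomial

theorem monic_pstar (a b : ℂ[X]) : (pstar a b).Monic :=
  monic_prod_of_monic _ _ fun γ _ => (monic_X_sub_C γ).pow _

open scoped Classical in
theorem rootMultiplicity_pstar (a b : ℂ[X]) (γ : ℂ) :
    rootMultiplicity γ (pstar a b) =
      ((a.roots.toFinset ×ˢ b.roots.toFinset).filter (fun p => p.1 + p.2 = γ)).sup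
        (fun p => a.rootMultiplicity p.1 + b.rootMultiplicity p.2 - 1) := by
  have hne : pstar a b ≠ 0 := (monic_pstar a b).ne_zero
  rw [← count_roots]
  unfold pstar at hne ⊢
  rw [roots_prod _ _ hne]
  simp only [roots_pow, roots_X_sub_C, Multiset.count_bind, Multiset.count_nsmul,
    Multiset.count_singleton, mul_ite, mul_one, mul_zero]
  rw [← Finset.sum_eq_multiset_sum, Finset.sum_ite_eq]
  split_ifs with hγ
  · rfl
  · rw [Finset.filter_eq_empty_iff.mpr fun p hp hpγ => hγ (Finset.mem_image.mpr ⟨p, hp, hpγ⟩),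
      Finset.sup_empty]
    rfl

theorem rootMultiplicity_pstar_le_iff (a b : ℂ[X]) (γ : ℂ) (n : ℕ) :
    rootMultiplicity γ (pstar a b) ≤ n ↔
      ∀ ρ σ, ρ + σ = γ → 0 < rootMultiplicity ρ a → 0 < rootMultiplicity σ b →
        rootMultiplicity ρ a + rootMultiplicity σ b - 1 ≤ n := by
  classical
  simp only [rootMultiplicity_pstar, Finset.sup_le_iff, Finset.mem_filter, Finset.mem_product,
    Multiset.mem_toFinset, ← Multiset.count_pos, count_roots, Prod.forall]
  grind

theorem stmt5_general (a b q : Polynomial ℂ) (ha : a ≠ 0) (hb : b ≠ 0) :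
    pstar (lcm a b) q = lcm (pstar a q) (pstar b q) := by
  have haq := (monic_pstar a q).ne_zero
  have hbq := (monic_pstar b q).ne_zero
  refine eq_of_monic_of_rootMultiplicity_eq (monic_pstar _ _) (monic_lcm haq hbq) fun γ => ?_
  refine eq_of_forall_ge_iff fun n => ?_
  simp only [rootMultiplicity_lcm haq hbq, max_le_iff, rootMultiplicity_pstar_le_iff,
    rootMultiplicity_lcm ha hb, ← forall_and]
  refine forall_congr' fun ρ => forall_congr' fun σ => ?_
  grind

/-- For nonzero `a, b, q ∈ ℂ[s]`, `lcm(a,b) * q = lcm(a * q, b * q)`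
for the star operation. -/
theorem stmt5 (a b q : Polynomial ℂ) (ha : a ≠ 0) (hb : b ≠ 0) (hq : q ≠ 0) :
    pstar (lcm a b) q = lcm (pstar a q) (pstar b q) :=
  stmt5_general a b q ha hb
end

section
/- Key computation for the Thom–Sebastiani equation: under the hypotheses of the main theorem (χ(g) = g, P(s)·f^s = b(s)·f^s, Q·g^t = c(t)·g^t), for every natural number k ≥ 1 and every 0 ≤ ℓ ≤ k one has P(k−χ)(A(k,χ)(f^{k−ℓ} g^ℓ)) = b(k−ℓ)·A(k,ℓ)·f^{k−ℓ} g^ℓ and B(k,χ)(Q(f^{k−ℓ} g^ℓ)) = B(k,ℓ)·c(ℓ)·f^{k−ℓ} g^ℓ, and consequently R(k)(h^k) = (b*c)(k)·h^k where h = f + g and R(k) = P(k−χ)A(k,χ) + B(k,χ)Q. -/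
open MvPolynomial

lemma end_pow_eigen {V : Type*} [AddCommGroup V] [Module ℂ V]
    (T : Module.End ℂ V) (v : V) (μ : ℂ) (hv : T v = μ • v) :
    ∀ j : ℕ, (T ^ j) v = μ ^ j • v := by
  intro j
  induction j with
  | zero => simp
  | succ j ih =>
      rw [pow_succ, Module.End.mul_apply, hv, map_smul, ih, smul_smul, pow_succ]
      ring_nf

lemma end_aeval_eigen {V : Type*} [AddCommGroup V] [Module ℂ V]
    (T : Module.End ℂ V) (v : V) (μ : ℂ) (hv : T v = μ • v) (p : Polynomial ℂ) :
    (Polynomial.aeval T p) v = Polynomial.eval μ p • v := by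
  rw [Polynomial.aeval_endomorphism, Polynomial.eval_eq_sum, Polynomial.sum, Polynomial.sum,
    Finset.sum_smul]
  refine Finset.sum_congr rfl fun i _ => ?_
  rw [end_pow_eigen T v μ hv i, smul_smul]

lemma bez_eval (b c bc : Polynomial ℂ) (A B : Polynomial (Polynomial ℂ))
    (hbez : Polynomial.C bc =
      A * Polynomial.aeval (Polynomial.C Polynomial.X - Polynomial.X) b +
        B * Polynomial.aeval Polynomial.X c) (k l : ℂ) :
    Polynomial.eval k bc =
      Polynomial.eval (k - l) b * Polynomial.eval l (A.map (Polynomial.evalRingHom k)) +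
        Polynomial.eval l (B.map (Polynomial.evalRingHom k)) * Polynomial.eval l c := by
  set ψ : Polynomial (Polynomial ℂ) →ₐ[ℂ] ℂ :=
    (Polynomial.aeval l).comp (Polynomial.mapAlgHom (Polynomial.aeval k)) with hψ
  have happ : ∀ z : Polynomial (Polynomial ℂ),
      ψ z = Polynomial.eval l (z.map (Polynomial.evalRingHom k)) := by
    intro z
    simp [hψ, Polynomial.coe_aeval_eq_eval]
  have h := congrArg ψ hbez
  rw [map_add, map_mul, map_mul, ← Polynomial.aeval_algHom_apply,
    ← Polynomial.aeval_algHom_apply] at h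
  have hCX : ψ (Polynomial.C Polynomial.X - Polynomial.X) = k - l := by
    rw [map_sub]; simp [happ]
  have hX : ψ (Polynomial.X : Polynomial (Polynomial ℂ)) = l := by simp [happ]
  rw [hCX, hX] at h
  have hC : ψ (Polynomial.C bc) = Polynomial.eval k bc := by simp [happ]
  rw [hC] at h
  rw [h, happ A, happ B]
  simp [Polynomial.coe_aeval_eq_eval]
  ring


/-- Key computation for the Thom–Sebastiani functional equation.
`f ∈ ℂ[x]`, `g ∈ ℂ[y]` are viewed inside `ℂ[x,y]`; `χ` is a derivation in the
`y`-variables (so `χ f = 0`, `χ g = g`); `P(s) = Σ_j P_j s^j` with the `P_j` operators in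
the `x`-variables (commuting with `χ` and with multiplication by `g`), `Q` an operator in
the `y`-variables (commuting with multiplication by `f`); the functional equations
`P(k)(f^k) = b(k)·f^k` and `Q(g^ℓ) = c(ℓ)·g^ℓ` hold for all naturals, and `A, B` realize
a Bézout identity `bc(s) = A(s,t)·b(s-t) + B(s,t)·c(t)` (two-variable polynomials are
encoded with inner variable `s` and outer variable `t`).  Then for all `1 ≤ k` and
`ℓ ≤ k`:  `P(k-χ)(A(k,χ)(f^{k-ℓ} g^ℓ)) = b(k-ℓ)·A(k,ℓ)·f^{k-ℓ} g^ℓ`,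
`B(k,χ)(Q(f^{k-ℓ} g^ℓ)) = B(k,ℓ)·c(ℓ)·f^{k-ℓ} g^ℓ`, and consequently
`R(k)(h^k) = bc(k)·h^k` for `h = f + g` and
`R(k) = P(k-χ)·A(k,χ) + B(k,χ)·Q`. -/
theorem stmt12 {n m : ℕ} (f₀ : MvPolynomial (Fin n) ℂ) (g₀ : MvPolynomial (Fin m) ℂ)
    (hf₀ : f₀ ≠ 0) (hg₀ : g₀ ≠ 0)
    (f g : MvPolynomial (Fin n ⊕ Fin m) ℂ)
    (hf : f = rename Sum.inl f₀) (hg : g = rename Sum.inr g₀)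
    (N : ℕ) (P : ℕ → Module.End ℂ (MvPolynomial (Fin n ⊕ Fin m) ℂ))
    (Q χ : Module.End ℂ (MvPolynomial (Fin n ⊕ Fin m) ℂ))
    (b c bc : Polynomial ℂ) (A B : Polynomial (Polynomial ℂ))
    (hχder : ∀ x y, χ (x * y) = x * χ y + χ x * y)
    (hχf : χ f = 0) (hχg : χ g = g)
    (hPχ : ∀ j, Commute (P j) χ)
    (hPg : ∀ j x, P j (g * x) = g * P j x)
    (hQf : ∀ x, Q (f * x) = f * Q x)
    (hfeq : ∀ k : ℕ,
      (∑ j ∈ Finset.range (N + 1), ((k : ℂ) ^ j) • P j) (f ^ k) =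
        Polynomial.eval (k : ℂ) b • f ^ k)
    (hgeq : ∀ ℓ : ℕ, Q (g ^ ℓ) = Polynomial.eval (ℓ : ℂ) c • g ^ ℓ)
    (hbez : Polynomial.C bc =
      A * Polynomial.aeval (Polynomial.C Polynomial.X - Polynomial.X) b +
        B * Polynomial.aeval Polynomial.X c) :
    ∀ k : ℕ, 1 ≤ k →
      (∀ ℓ : ℕ, ℓ ≤ k →
        ((∑ j ∈ Finset.range (N + 1), P j * ((k : ℂ) • (1 : Module.End ℂ _) - χ) ^ j) *
            Polynomial.aeval χ (A.map (Polynomial.evalRingHom (k : ℂ))))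
            (f ^ (k - ℓ) * g ^ ℓ) =
          (Polynomial.eval ((k : ℂ) - (ℓ : ℂ)) b *
            Polynomial.eval (ℓ : ℂ) (A.map (Polynomial.evalRingHom (k : ℂ)))) •
            (f ^ (k - ℓ) * g ^ ℓ) ∧
        (Polynomial.aeval χ (B.map (Polynomial.evalRingHom (k : ℂ))) * Q)
            (f ^ (k - ℓ) * g ^ ℓ) =
          (Polynomial.eval (ℓ : ℂ) (B.map (Polynomial.evalRingHom (k : ℂ))) *
            Polynomial.eval (ℓ : ℂ) c) • (f ^ (k - ℓ) * g ^ ℓ)) ∧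
      ((∑ j ∈ Finset.range (N + 1), P j * ((k : ℂ) • (1 : Module.End ℂ _) - χ) ^ j) *
          Polynomial.aeval χ (A.map (Polynomial.evalRingHom (k : ℂ))) +
        Polynomial.aeval χ (B.map (Polynomial.evalRingHom (k : ℂ))) * Q) ((f + g) ^ k) =
        Polynomial.eval (k : ℂ) bc • (f + g) ^ k := by
  -- basic derivation facts
  have hχ1 : χ 1 = 0 := by
    have h := hχder 1 1
    simp only [mul_one, one_mul] at h
    exact left_eq_add.mp h
  have hχfa : ∀ a : ℕ, χ (f ^ a) = 0 := by
    intro a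
    induction a with
    | zero => simpa using hχ1
    | succ a ih => rw [pow_succ, hχder, ih, hχf]; simp
  have hχgl : ∀ l : ℕ, χ (g ^ l) = (l : ℂ) • g ^ l := by
    intro l
    induction l with
    | zero => simpa using hχ1
    | succ l ih =>
        have h : χ (g ^ (l + 1)) = g ^ l * χ g + χ (g ^ l) * g := by
          rw [pow_succ]; exact hχder _ _
        rw [h, ih, hχg, smul_mul_assoc, pow_succ, Nat.cast_succ, add_smul, one_smul, add_comm]
  have hχx : ∀ (a l : ℕ), χ (f ^ a * g ^ l) = (l : ℂ) • (f ^ a * g ^ l) := by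
    intro a l
    rw [hχder, hχfa, hχgl, mul_smul_comm, zero_mul, add_zero]
  have hPfg : ∀ (j a l : ℕ), P j (f ^ a * g ^ l) = g ^ l * P j (f ^ a) := by
    intro j a l
    induction l with
    | zero => simp
    | succ l ih =>
        have h : f ^ a * g ^ (l + 1) = g * (f ^ a * g ^ l) := by ring
        rw [h, hPg, ih, pow_succ]
        ring
  have hQfg : ∀ (a l : ℕ),
      Q (f ^ a * g ^ l) = Polynomial.eval (l : ℂ) c • (f ^ a * g ^ l) := by
    intro a l
    induction a with
    | zero => simpa using hgeq l
    | succ a ih =>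
        have h : f ^ (a + 1) * g ^ l = f * (f ^ a * g ^ l) := by ring
        rw [h, hQf, ih, mul_smul_comm]
  intro k hk
  set A' := A.map (Polynomial.evalRingHom (k : ℂ)) with hA'
  set B' := B.map (Polynomial.evalRingHom (k : ℂ)) with hB'
  set D : Module.End ℂ (MvPolynomial (Fin n ⊕ Fin m) ℂ) :=
    (k : ℂ) • (1 : Module.End ℂ (MvPolynomial (Fin n ⊕ Fin m) ℂ)) - χ with hD
  set S : Module.End ℂ (MvPolynomial (Fin n ⊕ Fin m) ℂ) :=
    ∑ j ∈ Finset.range (N + 1), P j * D ^ j with hS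
  have claim1 : ∀ l : ℕ, l ≤ k →
      (S * Polynomial.aeval χ A') (f ^ (k - l) * g ^ l) =
        (Polynomial.eval ((k : ℂ) - (l : ℂ)) b * Polynomial.eval (l : ℂ) A') •
          (f ^ (k - l) * g ^ l) := by
    intro l hl
    have hxe : χ (f ^ (k - l) * g ^ l) = (l : ℂ) • (f ^ (k - l) * g ^ l) := hχx (k - l) l
    have hcast : ((k - l : ℕ) : ℂ) = (k : ℂ) - (l : ℂ) := by
      rw [Nat.cast_sub hl]
    have hDx : D (f ^ (k - l) * g ^ l) = ((k : ℂ) - (l : ℂ)) • (f ^ (k - l) * g ^ l) := by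
      rw [hD, LinearMap.sub_apply, LinearMap.smul_apply, Module.End.one_apply, hxe, sub_smul]
    have hSx : S (f ^ (k - l) * g ^ l) =
        Polynomial.eval ((k : ℂ) - (l : ℂ)) b • (f ^ (k - l) * g ^ l) := by
      rw [hS, LinearMap.sum_apply]
      have h1 : ∀ j, (P j * D ^ j) (f ^ (k - l) * g ^ l) =
          ((k : ℂ) - (l : ℂ)) ^ j • (g ^ l * P j (f ^ (k - l))) := by
        intro j
        rw [Module.End.mul_apply, end_pow_eigen D _ _ hDx j, map_smul, hPfg]
      calc (∑ j ∈ Finset.range (N + 1), (P j * D ^ j) (f ^ (k - l) * g ^ l))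
          = ∑ j ∈ Finset.range (N + 1),
              ((k : ℂ) - (l : ℂ)) ^ j • (g ^ l * P j (f ^ (k - l))) :=
            Finset.sum_congr rfl fun j _ => h1 j
        _ = g ^ l * ∑ j ∈ Finset.range (N + 1),
              ((k : ℂ) - (l : ℂ)) ^ j • P j (f ^ (k - l)) := by
            rw [Finset.mul_sum]
            exact Finset.sum_congr rfl fun j _ => (mul_smul_comm _ _ _).symm
        _ = g ^ l * ((∑ j ∈ Finset.range (N + 1),
              (((k - l : ℕ) : ℂ) ^ j) • P j) (f ^ (k - l))) := by
            rw [LinearMap.sum_apply]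
            congr 1
            refine Finset.sum_congr rfl fun j _ => ?_
            rw [LinearMap.smul_apply, hcast]
        _ = g ^ l * (Polynomial.eval ((k - l : ℕ) : ℂ) b • f ^ (k - l)) := by
            rw [hfeq (k - l)]
        _ = Polynomial.eval ((k : ℂ) - (l : ℂ)) b • (f ^ (k - l) * g ^ l) := by
            rw [hcast, mul_smul_comm, mul_comm]
    rw [Module.End.mul_apply, end_aeval_eigen χ _ _ hxe A', map_smul, hSx, smul_smul, mul_comm]
  have claim2 : ∀ l : ℕ, l ≤ k →
      (Polynomial.aeval χ B' * Q) (f ^ (k - l) * g ^ l) =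
        (Polynomial.eval (l : ℂ) B' * Polynomial.eval (l : ℂ) c) •
          (f ^ (k - l) * g ^ l) := by
    intro l hl
    rw [Module.End.mul_apply, hQfg, map_smul,
      end_aeval_eigen χ _ ((l : ℂ)) (hχx (k - l) l) B', smul_smul, mul_comm]
  refine ⟨fun l hl => ⟨claim1 l hl, claim2 l hl⟩, ?_⟩
  have key : ∀ l : ℕ, l ≤ k →
      (S * Polynomial.aeval χ A' + Polynomial.aeval χ B' * Q) (f ^ (k - l) * g ^ l) =
        Polynomial.eval (k : ℂ) bc • (f ^ (k - l) * g ^ l) := by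
    intro l hl
    rw [LinearMap.add_apply, claim1 l hl, claim2 l hl, ← add_smul]
    congr 1
    exact (bez_eval b c bc A B hbez (k : ℂ) (l : ℂ)).symm
  have hexpand : (f + g) ^ k =
      ∑ l ∈ Finset.range (k + 1), k.choose l • (f ^ (k - l) * g ^ l) := by
    rw [add_comm f g, add_pow]
    refine Finset.sum_congr rfl fun l _ => ?_
    rw [nsmul_eq_mul]
    ring
  calc (S * Polynomial.aeval χ A' + Polynomial.aeval χ B' * Q) ((f + g) ^ k)
      = ∑ l ∈ Finset.range (k + 1), k.choose l •
          ((S * Polynomial.aeval χ A' + Polynomial.aeval χ B' * Q)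
            (f ^ (k - l) * g ^ l)) := by
        rw [hexpand, map_sum]
        exact Finset.sum_congr rfl fun l _ => map_nsmul _ _ _
    _ = ∑ l ∈ Finset.range (k + 1), k.choose l •
          (Polynomial.eval (k : ℂ) bc • (f ^ (k - l) * g ^ l)) :=
        Finset.sum_congr rfl fun l hl => by
          rw [key l (Finset.mem_range_succ_iff.mp hl)]
    _ = Polynomial.eval (k : ℂ) bc •
          ∑ l ∈ Finset.range (k + 1), k.choose l • (f ^ (k - l) * g ^ l) := by
        rw [Finset.smul_sum]
        exact Finset.sum_congr rfl fun l _ => (smul_comm _ _ _).symm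
    _ = Polynomial.eval (k : ℂ) bc • (f + g) ^ k := by rw [← hexpand]
end

section
/- Suspension case of the star operation: let b ∈ ℂ[s] be nonzero and r ≥ 2, and set c(t) = ∏_{i=1}^{r-1} (t + i/r). If no two roots of b differ by j/r for any j = 1,…,r−1, then (b * c)(s) = ∏_{i=1}^{r-1} b(s + i/r). -/
open Polynomial Finset

theorem Polynomial.Monic.comp_X_sub_C_eq_prod_roots {K : Type*} [Field K] [IsAlgClosed K]
    [DecidableEq K] {a : K[X]} (ha : a.Monic) (σ : K) :
    a.comp (X - C σ) = ∏ ρ ∈ a.roots.toFinset, (X - C (ρ + σ)) ^ a.rootMultiplicity ρ := by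
  conv_lhs => rw [(IsAlgClosed.splits a).eq_prod_roots_of_monic ha]
  have shift (ρ : K) : (X - C ρ).comp (X - C σ) = X - C (ρ + σ) := by
    simp only [sub_comp, X_comp, C_comp, map_add]
    ring
  rw [multiset_prod_comp, Multiset.map_map]
  simp only [Function.comp_def, shift]
  rw [prod_multiset_map_count]
  simp only [count_roots]

theorem pstar_eq_prod_of_injOn {a b : ℂ[X]}
    (h : Set.InjOn (fun p : ℂ × ℂ => p.1 + p.2) ↑(a.roots.toFinset ×ˢ b.roots.toFinset)) :
    pstar a b = ∏ p ∈ a.roots.toFinset ×ˢ b.roots.toFinset,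
      (X - C (p.1 + p.2)) ^ (a.rootMultiplicity p.1 + b.rootMultiplicity p.2 - 1) := by
  rw [pstar, prod_image h]
  refine prod_congr rfl fun p hp => ?_
  have hfiber : (a.roots.toFinset ×ˢ b.roots.toFinset).filter
      (fun q => q.1 + q.2 = p.1 + p.2) = {p} := by
    ext q
    simp only [mem_filter, mem_singleton]
    exact ⟨fun ⟨hq, hsum⟩ => h hq hp hsum, by rintro rfl; exact ⟨hp, rfl⟩⟩
  rw [hfiber, sup_singleton]

theorem pstar_eq_prod_comp_of_injOn {a b : ℂ[X]} (ha : a.Monic) (hb : b.roots.Nodup)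
    (h : Set.InjOn (fun p : ℂ × ℂ => p.1 + p.2) ↑(a.roots.toFinset ×ˢ b.roots.toFinset)) :
    pstar a b = ∏ σ ∈ b.roots.toFinset, a.comp (X - C σ) := by
  rw [pstar_eq_prod_of_injOn h, prod_product_right]
  refine prod_congr rfl fun σ hσ => ?_
  have hσ₁ : b.rootMultiplicity σ = 1 := by
    rw [← count_roots]
    exact Multiset.count_eq_one_of_mem hb (Multiset.mem_toFinset.mp hσ)
  simp only [ha.comp_X_sub_C_eq_prod_roots, hσ₁, Nat.add_sub_cancel]

theorem Polynomial.roots_prod_X_add_C {R ι : Type*} [CommRing R] [IsDomain R] (s : Finset ι)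
    (g : ι → R) : (∏ i ∈ s, (X + C (g i))).roots = s.val.map fun i => -g i := by
  simp_rw [← sub_neg_eq_add, ← map_neg C, prod_eq_multiset_prod]
  simpa only [Multiset.map_map, Function.comp_def] using
    roots_multiset_prod_X_sub_C (s.val.map fun i => -g i)

theorem injOn_neg_natCast_div {r : ℕ} :
    Set.InjOn (fun i : ℕ => -((i : ℂ) / r)) ↑(Icc 1 (r - 1)) := by
  intro i hi j _ hij
  have hr : (r : ℂ) ≠ 0 := by
    simp only [coe_Icc, Set.mem_Icc] at hi
    exact_mod_cast (by omega : r ≠ 0)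
  simpa [hr] using hij

theorem injOn_add_roots_neg_div {b : ℂ[X]} {r : ℕ}
    (hsep : ∀ ρ σ : ℂ, b.IsRoot ρ → b.IsRoot σ →
      ∀ j ∈ Finset.Icc 1 (r - 1), ρ - σ ≠ (j : ℂ) / r) :
    Set.InjOn (fun p : ℂ × ℂ => p.1 + p.2)
      ↑(b.roots.toFinset ×ˢ (Icc 1 (r - 1)).image fun i : ℕ => -((i : ℂ) / r)) := by
  have hgap : ∀ ρ ρ' : ℂ, b.IsRoot ρ → b.IsRoot ρ' → ∀ i ∈ Icc 1 (r - 1), ∀ j ∈ Icc 1 (r - 1),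
      j < i → ρ - ρ' ≠ ((i : ℂ) - j) / r := by
    intro ρ ρ' hρ hρ' i hi j hj hji
    rw [← Nat.cast_sub hji.le]
    refine hsep ρ ρ' hρ hρ' (i - j) ?_
    simp only [mem_Icc] at hi hj ⊢
    omega
  rintro ⟨ρ, σ⟩ hp ⟨ρ', σ'⟩ hq hsum
  simp only [coe_product, Set.mem_prod, mem_coe, Multiset.mem_toFinset, mem_image] at hp hq
  obtain ⟨hρ, i, hi, rfl⟩ := hp
  obtain ⟨hρ', j, hj, rfl⟩ := hq
  have hdiff : ρ - ρ' = ((i : ℂ) - j) / r := by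
    linear_combination hsum
  rcases lt_trichotomy i j with hij | rfl | hij
  · exact absurd (by linear_combination -hdiff) (hgap ρ' ρ (isRoot_of_mem_roots hρ')
      (isRoot_of_mem_roots hρ) j hj i hi hij)
  · rw [add_left_inj] at hsum
    exact congrArg (·, _) hsum
  · exact absurd hdiff (hgap ρ ρ' (isRoot_of_mem_roots hρ) (isRoot_of_mem_roots hρ')
      i hi j hj hij)

open Polynomial in
theorem stmt18_general (b : Polynomial ℂ) (hmonic : b.Monic) (r : ℕ)
    (hsep : ∀ ρ σ : ℂ, b.IsRoot ρ → b.IsRoot σ →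
      ∀ j ∈ Finset.Icc 1 (r - 1), ρ - σ ≠ (j : ℂ) / r) :
    pstar b (∏ i ∈ Finset.Icc 1 (r - 1), (X + C ((i : ℂ) / r))) =
      ∏ i ∈ Finset.Icc 1 (r - 1), b.comp (X + C ((i : ℂ) / r)) := by
  have hroots := roots_prod_X_add_C (Icc 1 (r - 1)) fun i : ℕ => (i : ℂ) / r
  have hrootsFinset : (∏ i ∈ Icc 1 (r - 1), (X + C ((i : ℂ) / r))).roots.toFinset =
      (Icc 1 (r - 1)).image fun i : ℕ => -((i : ℂ) / r) := by
    rw [hroots, Multiset.toFinset_map, val_toFinset]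
  have hnodup := (Icc 1 (r - 1)).nodup.map_on fun i hi j hj => injOn_neg_natCast_div hi hj
  rw [pstar_eq_prod_comp_of_injOn hmonic (hroots ▸ hnodup)
    (hrootsFinset ▸ injOn_add_roots_neg_div hsep), hrootsFinset,
    prod_image injOn_neg_natCast_div]
  simp only [map_neg, sub_neg_eq_add]

open Polynomial in
/-- Suspension case: let `b ∈ ℂ[s]` be nonzero (and monic, as is every
reduced Bernstein–Sato polynomial and every star product), `r ≥ 2`, and
`c(t) = ∏_{i=1}^{r-1} (t + i/r)`.  If no two roots of `b` differ by `j/r` for any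
`j = 1, …, r-1`, then `(b * c)(s) = ∏_{i=1}^{r-1} b(s + i/r)`. -/
theorem stmt18 (b : Polynomial ℂ) (hb : b ≠ 0) (hmonic : b.Monic) (r : ℕ) (hr : 2 ≤ r)
    (hsep : ∀ ρ σ : ℂ, b.IsRoot ρ → b.IsRoot σ →
      ∀ j ∈ Finset.Icc 1 (r - 1), ρ - σ ≠ (j : ℂ) / r) :
    pstar b (∏ i ∈ Finset.Icc 1 (r - 1), (X + C ((i : ℂ) / r))) =
      ∏ i ∈ Finset.Icc 1 (r - 1), b.comp (X + C ((i : ℂ) / r)) :=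
  stmt18_general b hmonic r hsep
end
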